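/- The following identity of ℤ-linear endomorphisms of M_n holds: E3∘E3∘E3∘E2 + 3·(E3∘E2∘E3∘E3) = 3·(E3∘E3∘E2∘E3) + E2∘E3∘E3∘E3. (Decategorified content of Theorem 3.4(5)(e), lifting the Serre relation e_3³e_2 − 3e_3²e_2e_3 + 3e_3e_2e_3² − e_2e_3³ = 0.) -/

import Mathlib

/-- The free `ℤ`-module on the sequences `a : Fin n → Fin 8`, modelling the
Grothendieck group `K(𝒪ⁿ)` with basis the classes `b_a` of Verma modules. -/
abbrev GrGroup (n : ℕ) : Type := (Fin n → Fin 8) →₀ ℤ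

/-- The basis element `b_a` of the Grothendieck group model. -/
noncomputable def bclass {n : ℕ} (a : Fin n → Fin 8) : GrGroup n := Finsupp.single a 1

/-- The integers `c₁(a), c₂(a), c₃(a)` attached to a sequence `a : Fin n → Fin 8`:
`c₁(a) = #{m : aₘ ∈ {4,5}} − #{m : aₘ ∈ {2,3}}`,
`c₂(a) = #{m : aₘ ∈ {2,6}} − #{m : aₘ ∈ {1,5}}`,
`c₃(a) = #{m : aₘ odd} − #{m : aₘ even}`. -/
def cseq {n : ℕ} : Fin 3 → (Fin n → Fin 8) → ℤ
  | 0, a => ((Finset.univ.filter fun m => a m = 4 ∨ a m = 5).card : ℤ) -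
      ((Finset.univ.filter fun m => a m = 2 ∨ a m = 3).card : ℤ)
  | 1, a => ((Finset.univ.filter fun m => a m = 2 ∨ a m = 6).card : ℤ) -
      ((Finset.univ.filter fun m => a m = 1 ∨ a m = 5).card : ℤ)
  | 2, a => ((Finset.univ.filter fun m => (a m : ℕ) % 2 = 1).card : ℤ) -
      ((Finset.univ.filter fun m => (a m : ℕ) % 2 = 0).card : ℤ)

/-- `E₂ b_a = Σ_{m : aₘ∈{1,5}} b_{a[m↦aₘ+1]}`. -/
noncomputable def E2op (n : ℕ) : GrGroup n →ₗ[ℤ] GrGroup n :=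
  Finsupp.lift (GrGroup n) ℤ (Fin n → Fin 8) (fun a =>
    ∑ m : Fin n, if a m = 1 ∨ a m = 5 then
      bclass (Function.update a m (a m + 1)) else 0)

/-- `E₃ b_a = Σ_{m : aₘ∈{0,2,4,6}} b_{a[m↦aₘ+1]}`. -/
noncomputable def E3op (n : ℕ) : GrGroup n →ₗ[ℤ] GrGroup n :=
  Finsupp.lift (GrGroup n) ℤ (Fin n → Fin 8) (fun a =>
    ∑ m : Fin n, if a m = 0 ∨ a m = 2 ∨ a m = 4 ∨ a m = 6 then
      bclass (Function.update a m (a m + 1)) else 0)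

/-!
`E₃ = Σₘ xₘ` and `E₂ = Σₘ yₘ`, where `xₘ`, `yₘ` change only the `m`-th entry of `a`. Operators
at different positions commute, so `ad(E₃)³ E₂ = Σₘ ad(xₘ)³ yₘ`, and each summand vanishes
because `xₘ² = 0` (it sends an even entry to an odd one, which it then kills). Expanding
`ad(E₃)³ E₂ = 0` in the associative ring of endomorphisms gives the relation.
-/

open Function Finsupp

section Commutator

variable {R : Type*} [Ring R]

theorem Commute.lie_right {a b c : R} (hab : Commute a b) (hac : Commute a c) :
    Commute a ⁅b, c⁆ := by
  rw [Ring.lie_def]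
  exact (hab.mul_right hac).sub_right (hac.mul_right hab)

theorem lie_lie_lie_eq_sub (x y : R) :
    ⁅x, ⁅x, ⁅x, y⁆⁆⁆ = (x * (x * (x * y)) + 3 * (x * (y * (x * x)))) -
      (3 * (x * (x * (y * x))) + y * (x * (x * x))) := by
  simp only [Ring.lie_def]
  noncomm_ring

theorem lie_lie_lie_eq_zero_of_mul_self_eq_zero {x : R} (hx : x * x = 0) (y : R) :
    ⁅x, ⁅x, ⁅x, y⁆⁆⁆ = 0 := by
  have hxxa : ∀ a : R, x * (x * a) = 0 := fun a => by rw [← mul_assoc, hx, zero_mul]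
  simp [lie_lie_lie_eq_sub, hx, hxxa]

variable {ι : Type*} [Fintype ι]

theorem lie_sum_eq_sum_lie_of_commute (x z : ι → R)
    (h : ∀ m m', m ≠ m' → Commute (x m) (z m')) :
    ⁅∑ m, x m, ∑ m, z m⁆ = ∑ m, ⁅x m, z m⁆ := by
  have hexpand : ⁅∑ m, x m, ∑ m, z m⁆ = ∑ m, ∑ m', ⁅x m, z m'⁆ := by
    simp only [Ring.lie_def, Finset.sum_mul, Finset.mul_sum, Finset.sum_sub_distrib]
    rw [Finset.sum_comm (f := fun i j => x j * z i)]
  rw [hexpand]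
  exact Finset.sum_congr rfl fun m _ =>
    Fintype.sum_eq_single m fun m' hm' => (h m m' hm'.symm).lie_eq

theorem sum_lie_lie_lie_eq_zero (x y : ι → R)
    (hxx : ∀ m m', m ≠ m' → Commute (x m) (x m'))
    (hxy : ∀ m m', m ≠ m' → Commute (x m) (y m')) (hsq : ∀ m, x m * x m = 0) :
    ⁅∑ m, x m, ⁅∑ m, x m, ⁅∑ m, x m, ∑ m, y m⁆⁆⁆ = 0 := by
  have hxy₁ m m' (hne : m ≠ m') := (hxx m m' hne).lie_right (hxy m m' hne)
  have hxy₂ m m' (hne : m ≠ m') := (hxx m m' hne).lie_right (hxy₁ m m' hne)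
  rw [lie_sum_eq_sum_lie_of_commute x y hxy, lie_sum_eq_sum_lie_of_commute x _ hxy₁,
    lie_sum_eq_sum_lie_of_commute x _ hxy₂]
  exact Finset.sum_eq_zero fun m _ => lie_lie_lie_eq_zero_of_mul_self_eq_zero (hsq m) _

end Commutator

section SiteOp

variable {ι α : Type*} [DecidableEq ι] (P : α → Prop) [DecidablePred P] (g : α → α)

noncomputable def siteOp (m : ι) : ((ι → α) →₀ ℤ) →ₗ[ℤ] (ι → α) →₀ ℤ :=
  Finsupp.lift _ ℤ _ fun a => if P (a m) then single (update a m (g (a m))) 1 else 0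

theorem siteOp_single (m : ι) (a : ι → α) (c : ℤ) :
    siteOp P g m (single a c) = if P (a m) then single (update a m (g (a m))) c else 0 := by
  simp [siteOp]

theorem siteOp_commute (Q : α → Prop) [DecidablePred Q] (h : α → α) {m m' : ι} (hne : m ≠ m') :
    Commute (siteOp P g m) (siteOp Q h m') := by
  refine Finsupp.lhom_ext fun a c => ?_
  simp only [Module.End.mul_apply, siteOp_single]
  by_cases hP : P (a m) <;> by_cases hQ : Q (a m') <;>
    simp [hP, hQ, siteOp_single, update_of_ne hne, update_of_ne hne.symm, update_comm hne]

theorem siteOp_mul_self (hPg : ∀ k, P k → ¬ P (g k)) (m : ι) :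
    siteOp P g m * siteOp P g m = 0 := by
  refine Finsupp.lhom_ext fun a c => ?_
  simp only [Module.End.mul_apply, siteOp_single, LinearMap.zero_apply]
  by_cases hP : P (a m) <;> simp [hP, siteOp_single, hPg]

end SiteOp

theorem E2op_eq_sum_siteOp (n : ℕ) :
    E2op n = ∑ m : Fin n, siteOp (fun k : Fin 8 => k = 1 ∨ k = 5) (· + 1) m := by
  refine Finsupp.lhom_ext fun a c => ?_
  simp [E2op, bclass, siteOp_single, LinearMap.sum_apply, Finset.smul_sum]

theorem E3op_eq_sum_siteOp (n : ℕ) :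
    E3op n = ∑ m : Fin n, siteOp (fun k : Fin 8 => k = 0 ∨ k = 2 ∨ k = 4 ∨ k = 6) (· + 1) m := by
  refine Finsupp.lhom_ext fun a c => ?_
  simp [E3op, bclass, siteOp_single, LinearMap.sum_apply, Finset.smul_sum]

theorem serre_E3E2_relation_general (n : ℕ) :
    E3op n ∘ₗ E3op n ∘ₗ E3op n ∘ₗ E2op n + 3 • (E3op n ∘ₗ E2op n ∘ₗ E3op n ∘ₗ E3op n) =
      3 • (E3op n ∘ₗ E3op n ∘ₗ E2op n ∘ₗ E3op n) + E2op n ∘ₗ E3op n ∘ₗ E3op n ∘ₗ E3op n := by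
  rw [E3op_eq_sum_siteOp, E2op_eq_sum_siteOp]
  simp only [← Module.End.mul_eq_comp, nsmul_eq_mul, Nat.cast_ofNat]
  rw [← sub_eq_zero, ← lie_lie_lie_eq_sub]
  exact sum_lie_lie_lie_eq_zero _ _ (fun _ _ hne => siteOp_commute _ _ _ _ hne)
    (fun _ _ hne => siteOp_commute _ _ _ _ hne) (siteOp_mul_self _ _ (by decide))

/-- Decategorified Theorem 3.4(5)(e):
`E₃∘E₃∘E₃∘E₂ + 3(E₃∘E₂∘E₃∘E₃) = 3(E₃∘E₃∘E₂∘E₃) + E₂∘E₃∘E₃∘E₃`,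
lifting the Serre relation `e₃³e₂ − 3e₃²e₂e₃ + 3e₃e₂e₃² − e₂e₃³ = 0`. -/
theorem serre_E3E2_relation (n : ℕ) (hn : 0 < n) :
    E3op n ∘ₗ E3op n ∘ₗ E3op n ∘ₗ E2op n + 3 • (E3op n ∘ₗ E2op n ∘ₗ E3op n ∘ₗ E3op n) =
      3 • (E3op n ∘ₗ E3op n ∘ₗ E2op n ∘ₗ E3op n) + E2op n ∘ₗ E3op n ∘ₗ E3op n ∘ₗ E3op n :=
  serre_E3E2_relation_general n
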